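/- Let A be a Hopf algebra over k with bijective antipode S, and let Ω¹(A) be a left covariant first order differential calculus on A determined by: a free left A-module basis ω₁, …, ω_n of left-invariant one-forms, and k-linear maps θ_ij, χ_i : A → k (i,j = 1,…,n) satisfying θ_ij(ab) = Σ_k θ_ik(a)θ_kj(b), θ_ij(1) = δ_ij, χ_i(ab) = Σ_j χ_j(a)θ_ji(b) + ε(a)χ_i(b), with ω_i·a = Σ_j (θ_ij ⊳ a) ω_j and d(a) = Σ_i (χ_i ⊳ a) ω_i, where f ⊳ a = (id ⊗ f)(Δ(a)). Let ξ_i ∈ Hom_A(Ω¹(A), A) be the right dual basis, ξ_i(ω_j) = δ_ij. Then the map ∇ : Hom_A(Ω¹(A), A) → A, ∇(f) = Σ_i (χ_i ∘ S⁻²) ⊳ f(ω_i), is the unique hom-connection on A with respect to Ω¹(A) such that ∇(ξ_i) = 0 for all i = 1, …, n. -/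

import Mathlib

/-!
Write `T = θ ∘ S⁻¹`, `T' = θ ∘ S⁻²`, `X = χ ∘ S⁻¹`, `X' = χ ∘ S⁻²`. Because `θ` is multiplicative
and `χ` is a `θ`-twisted derivation, the identities `S⁻¹(a₍₂₎) a₍₁₎ = ε(a) = a₍₂₎ S⁻¹(a₍₁₎)` and
their images under `S⁻¹` become identities in the convolution algebra `A*`, where
`(f * g)(a) = f(a₍₁₎) g(a₍₂₎)`: `Σ_j θ_ji * T_lj = δ_li`, the matrices `T` and `T'` are mutually
inverse, `Σ_l T_lj * χ_l = -X_j` and `Σ_i X_i * T'_im = -X'_m`.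
Since `⊳` is an action of the convolution algebra, the first makes `Ω¹(A)` free as a right
`A`-module on the `ω_j`, and the second makes `Hom_A(Ω¹(A), A)` free as a right `A`-module on the
`ξ_i`: `f = Σ_i ξ_i · c_i(f)` with `c_i(f) = Σ_m T'_im ⊳ f(ω_m)`. A hom-connection killing the `ξ_i`
therefore sends `f` to `Σ_i ξ_i(d c_i(f)) = -Σ_i X_i ⊳ c_i(f) = Σ_m X'_m ⊳ f(ω_m)`. Conversely
`f ↦ Σ_i ξ_i(d c_i(f))` is a hom-connection, because `c_i(f · b) = c_i(f) b` and `d` satisfies the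
Leibniz rule.
-/

open TensorProduct

namespace Stmt13

variable {k A : Type*} [Field k] [Ring A] [HopfAlgebra k A] {n : ℕ}

/-- The left action `f ⊳ a = (id ⊗ f)(Δ a)` of a functional `f : A → k` on `A`. -/
noncomputable def hit (f : A →ₗ[k] k) : A →ₗ[k] A :=
  (TensorProduct.rid k A).toLinearMap ∘ₗ (LinearMap.lTensor A f) ∘ₗ Coalgebra.comul

variable (θ : Fin n → Fin n → (A →ₗ[k] k))

/-- The right `A`-action on `Ω¹(A)` in left coordinates:
`(x · a)_i = Σ_j x_j (θ_ji ⊳ a)`. -/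
noncomputable def ract (x : Fin n → A) (a : A) : Fin n → A :=
  fun i => ∑ j, x j * hit (θ j i) a

/-- Left multiplication on `Ω¹(A)` (coordinatewise). -/
def lmulPi (a : A) : (Fin n → A) →ₗ[k] (Fin n → A) where
  toFun x := fun i => a * x i
  map_add' x y := by funext i; simp [mul_add]
  map_smul' c x := by funext i; simp [mul_smul_comm]

/-- `Hom_A(Ω¹(A), A)`: the right `A`-linear maps `Ω¹(A) → A`. -/
noncomputable def homD : Submodule k ((Fin n → A) →ₗ[k] A) where
  carrier := {f | ∀ (x : Fin n → A) (a : A), f (ract θ x a) = f x * a}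
  add_mem' {f g} hf hg := by
    intro x a
    simp only [LinearMap.add_apply, hf x a, hg x a, add_mul]
  zero_mem' := by intro x a; simp
  smul_mem' c f hf := by
    intro x a
    simp only [LinearMap.smul_apply, hf x a, smul_mul_assoc]

/-- The left-invariant basis `ω_i` of `Ω¹(A)`. -/
def om (i : Fin n) : Fin n → A := Pi.single i 1

/-- `d : A → Ω¹(A)` in coordinates: `d a = ((χ_i ⊳ a))_i`. -/
noncomputable def dvec (χ : Fin n → (A →ₗ[k] k)) (a : A) : Fin n → A :=
  fun i => hit (χ i) a

lemma ract_lmulPi (a c : A) (x : Fin n → A) :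
    ract θ (lmulPi (k := k) a x) c = lmulPi (k := k) a (ract θ x c) := by
  funext i; simp [ract, lmulPi, Finset.mul_sum, mul_assoc]

/-- The right action of `a : A` on `f ∈ Hom_A(Ω¹(A), A)`: `(f·a)(x) = f(a • x)`. -/
noncomputable def rAct (f : homD θ) (a : A) : homD θ :=
  ⟨f.1 ∘ₗ lmulPi a, by
    intro x c
    simp only [LinearMap.comp_apply]
    rw [← ract_lmulPi, f.2 _ c]⟩

/-- The hom-connection property:  `∇(f·a) = ∇(f)·a + f(da)`. -/
noncomputable def IsHomConn (χ : Fin n → (A →ₗ[k] k)) (nabla : homD θ →ₗ[k] A) : Prop :=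
  ∀ (f : homD θ) (a : A),
    nabla (rAct θ f a) = nabla f * a + f.1 (dvec χ a)

open Coalgebra WithConv

lemma hit_apply_repr (f : A →ₗ[k] k) {a : A} {ι : Type*} (r : Repr k a ι) :
    hit f a = ∑ i ∈ r.index, f (r.right i) • r.left i := by
  simp [hit, ← r.eq]

lemma hit_counit (a : A) : hit (counit (R := k)) a = a := by
  simp [hit]

lemma hit_apply_one (f : A →ₗ[k] k) : hit f 1 = f 1 • 1 := by
  simp [hit, Bialgebra.comul_one, Algebra.TensorProduct.one_def]

lemma hit_convMul (f g : WithConv (A →ₗ[k] k)) (a : A) :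
    hit (f * g).ofConv a = hit f.ofConv (hit g.ofConv a) := by
  let r := ℛ k a
  let r₁ := fun i => ℛ k (r.left i)
  let r₂ := fun i => ℛ k (r.right i)
  have hcoassoc := congr(TensorProduct.rid k A (LinearMap.lTensor A
    (LinearMap.mul' k k ∘ₗ TensorProduct.map f.ofConv g.ofConv) $(sum_tmul_tmul_eq r r₁ r₂)))
  simp only [map_sum, LinearMap.lTensor_tmul, LinearMap.comp_apply, TensorProduct.map_tmul,
    LinearMap.mul'_apply, TensorProduct.rid_tmul] at hcoassoc
  rw [hit_apply_repr _ r, hit_apply_repr _ r, map_sum]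
  simp only [(r₂ _).convMul_apply, map_smul, hit_apply_repr _ (r₁ _), Finset.sum_smul,
    Finset.smul_sum, smul_smul]
  rw [← hcoassoc]
  simp [mul_comm]

/-- `⊳` makes `A` a left module over the convolution algebra `A*`. -/
noncomputable def hitRingHom : WithConv (A →ₗ[k] k) →+* Module.End k A where
  toFun f := hit f.ofConv
  map_one' := by
    have : (1 : WithConv (A →ₗ[k] k)).ofConv = counit := by ext; simp
    exact LinearMap.ext fun a => by simp [this, hit_counit]
  map_mul' f g := LinearMap.ext (hit_convMul f g)
  map_zero' := by ext; simp [hit]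
  map_add' f g := by ext; simp [hit, LinearMap.lTensor_add]

@[simp] lemma hitRingHom_apply (f : WithConv (A →ₗ[k] k)) (a : A) :
    hitRingHom f a = hit f.ofConv a := rfl

lemma sum_hit_hit {ι : Type*} (s : Finset ι) (f g : ι → A →ₗ[k] k) (a : A) :
    ∑ t ∈ s, hit (f t) (hit (g t) a) = hitRingHom (∑ t ∈ s, toConv (f t) * toConv (g t)) a := by
  simp [map_sum, map_mul]

lemma hit_mul_of_map_mul (φ : A →ₗ[k] k) {ι : Type*} (s : Finset ι) (g h : ι → A →ₗ[k] k)
    (hφ : ∀ x y, φ (x * y) = ∑ t ∈ s, g t x * h t y) (a b : A) :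
    hit φ (a * b) = ∑ t ∈ s, hit (g t) a * hit (h t) b := by
  rw [hit_apply_repr _ ((ℛ k a).mul (ℛ k b))]
  simp only [Repr.mul_index, Repr.mul_left, Repr.mul_right, hφ, Finset.sum_product,
    hit_apply_repr _ (ℛ k a), hit_apply_repr _ (ℛ k b), Finset.sum_mul_sum, Finset.sum_smul,
    smul_mul_smul_comm]
  rw [Finset.sum_comm (s := s)]
  refine Finset.sum_congr rfl fun i _ => ?_
  rw [Finset.sum_comm (s := s)]

lemma sum_counit_right_smul_left {a : A} {ι : Type*} (r : Repr k a ι) :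
    ∑ t ∈ r.index, counit (R := k) (r.right t) • r.left t = a := by
  simpa only [map_sum, TensorProduct.rid_tmul, one_smul] using
    congr(TensorProduct.rid k A $(sum_tmul_counit_eq r))

section InverseAntipode

open HopfAlgebra

variable (S' : A →ₗ[k] A) (hS'l : ∀ a, S' (antipode k a) = a) (hS'r : ∀ a, antipode k (S' a) = a)

include hS'r in
lemma counit_S' (a : A) : counit (R := k) (S' a) = counit a := by
  rw [← counit_antipode (R := k), hS'r]

include hS'l in
lemma S'_one : S' 1 = 1 := by
  simpa using hS'l 1

include hS'l hS'r

lemma S'_mul (x y : A) : S' (x * y) = S' y * S' x := by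
  apply Function.LeftInverse.injective hS'l
  rw [antipode_mul_antidistrib, hS'r, hS'r, hS'r]

lemma sum_S'_mul_S'_eq_smul_one {ι : Type*} (s : Finset ι) (x y : ι → A) (c : k)
    (h : ∑ t ∈ s, x t * y t = c • 1) : ∑ t ∈ s, S' (y t) * S' (x t) = c • 1 := by
  simp only [← S'_mul S' hS'l hS'r, ← map_sum, h, map_smul, S'_one S' hS'l]

variable {a : A} {ι : Type*} (r : Repr k a ι)

lemma sum_S'_right_mul_left :
    ∑ t ∈ r.index, S' (r.right t) * r.left t = counit (R := k) a • 1 := by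
  simpa only [hS'l] using
    sum_S'_mul_S'_eq_smul_one S' hS'l hS'r _ _ _ _ (sum_antipode_mul_eq_smul r)

lemma sum_right_mul_S'_left :
    ∑ t ∈ r.index, r.right t * S' (r.left t) = counit (R := k) a • 1 := by
  simpa only [hS'l] using
    sum_S'_mul_S'_eq_smul_one S' hS'l hS'r _ _ _ _ (sum_mul_antipode_eq_smul r)

lemma sum_S'_left_mul_S'S'_right :
    ∑ t ∈ r.index, S' (r.left t) * S' (S' (r.right t)) = counit (R := k) a • 1 :=
  sum_S'_mul_S'_eq_smul_one S' hS'l hS'r _ _ _ _ (sum_S'_right_mul_left S' hS'l hS'r r)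

lemma sum_S'S'_left_mul_S'_right :
    ∑ t ∈ r.index, S' (S' (r.left t)) * S' (r.right t) = counit (R := k) a • 1 :=
  sum_S'_mul_S'_eq_smul_one S' hS'l hS'r _ _ _ _ (sum_right_mul_S'_left S' hS'l hS'r r)

end InverseAntipode

lemma ract_om_apply (j : Fin n) (b : A) (i : Fin n) : ract θ (om j) b i = hit (θ j i) b := by
  simp [ract, om, Pi.single_apply, ite_mul, Finset.sum_ite_eq']

lemma rAct_rAct (f : homD θ) (a b : A) : rAct θ (rAct θ f a) b = rAct θ f (a * b) := by
  refine Subtype.ext (LinearMap.ext fun x => ?_)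
  simp [rAct, lmulPi, mul_assoc]

lemma sum_rAct {ι : Type*} (s : Finset ι) (f : ι → homD θ) (b : A) :
    rAct θ (∑ t ∈ s, f t) b = ∑ t ∈ s, rAct θ (f t) b := by
  refine Subtype.ext (LinearMap.ext fun x => ?_)
  simp [rAct]

section CalculusData

variable (χ : Fin n → (A →ₗ[k] k)) (S' : A →ₗ[k] A)
  (hS'l : ∀ a, S' (HopfAlgebra.antipode k a) = a) (hS'r : ∀ a, HopfAlgebra.antipode k (S' a) = a)
  (hθmul : ∀ (i j : Fin n) (a b : A), θ i j (a * b) = ∑ l, θ i l a * θ l j b)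
  (hθone : ∀ i j : Fin n, θ i j 1 = if i = j then (1 : k) else 0)
  (hχ : ∀ (i : Fin n) (a b : A),
    χ i (a * b) = (∑ j, χ j a * θ j i b) + Coalgebra.counit a * χ i b)
  (ξ : Fin n → homD θ) (hξ : ∀ i j, (ξ i).1 (om j) = if i = j then (1 : A) else 0)

/-- The coefficients of `f` in the right basis `ξ`: see `sum_rAct_dualBasis_dualCoeff`. -/
noncomputable def dualCoeff (f : homD θ) (i : Fin n) : A :=
  ∑ m, hit (θ i m ∘ₗ S' ∘ₗ S') (f.1 (om m))

noncomputable def homConn : homD θ →ₗ[k] A :=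
  ∑ m, hit (χ m ∘ₗ S' ∘ₗ S') ∘ₗ LinearMap.applyₗ (om m) ∘ₗ (homD θ).subtype

lemma homConn_apply (f : homD θ) :
    homConn θ χ S' f = ∑ m, hit (χ m ∘ₗ S' ∘ₗ S') (f.1 (om m)) := by
  simp [homConn]

include hθmul in
lemma sum_sum_θ_mul_θ {ι : Type*} (s : Finset ι) (x y : ι → A) (i j : Fin n) :
    ∑ l, ∑ t ∈ s, θ i l (x t) * θ l j (y t) = θ i j (∑ t ∈ s, x t * y t) := by
  simp only [map_sum, hθmul]
  exact Finset.sum_comm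

include hχ in
lemma sum_sum_χ_mul_θ {ι : Type*} (s : Finset ι) (x y : ι → A) (j : Fin n) :
    ∑ l, ∑ t ∈ s, χ l (x t) * θ l j (y t) =
      χ j (∑ t ∈ s, x t * y t) - χ j (∑ t ∈ s, counit (R := k) (x t) • y t) := by
  simp only [map_sum, hχ, map_smul, smul_eq_mul, Finset.sum_add_distrib, add_sub_cancel_right]
  exact Finset.sum_comm

include hθone hχ in
lemma χ_one (i : Fin n) : χ i 1 = 0 := by
  simpa [hθone] using hχ i 1 1

include hχ in
lemma dvec_mul (a b : A) :
    dvec χ (a * b) = ract θ (dvec χ a) b + lmulPi (k := k) a (dvec χ b) := by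
  funext i
  have := hit_mul_of_map_mul (χ i) (Finset.univ : Finset (Option (Fin n)))
    (fun t => t.elim counit χ) (fun t => t.elim (χ i) (θ · i))
    (fun x y => by simp [Fintype.sum_option, hχ, add_comm]) a b
  simpa [dvec, ract, lmulPi, Fintype.sum_option, hit_counit, add_comm] using this

include hS'l hθone hχ hξ in
lemma homConn_dualBasis (i : Fin n) : homConn θ χ S' (ξ i) = 0 := by
  refine (homConn_apply θ χ S' _).trans (Finset.sum_eq_zero fun m _ => ?_)
  rw [hξ]
  split_ifs
  · simp [hit_apply_one, S'_one S' hS'l, χ_one θ χ hθone hχ]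
  · simp

include hS'l hS'r

include hθmul hθone in
lemma sum_θ_convMul_θS' (l i : Fin n) :
    ∑ j, toConv (θ j i) * toConv (θ l j ∘ₗ S') = if l = i then 1 else 0 := by
  ext c
  simp only [ofConv_sum, LinearMap.sum_apply, (ℛ k c).convMul_apply, LinearMap.comp_apply]
  simp only [mul_comm (θ _ i _)]
  rw [sum_sum_θ_mul_θ θ hθmul, sum_S'_right_mul_left S' hS'l hS'r]
  split_ifs with h <;> simp [h, hθone]

include hθmul hθone in
lemma sum_θS'_convMul_θS'S' (j m : Fin n) :
    ∑ i, toConv (θ j i ∘ₗ S') * toConv (θ i m ∘ₗ S' ∘ₗ S') = if j = m then 1 else 0 := by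
  ext c
  simp only [ofConv_sum, LinearMap.sum_apply, (ℛ k c).convMul_apply, LinearMap.comp_apply]
  rw [sum_sum_θ_mul_θ θ hθmul, sum_S'_left_mul_S'S'_right S' hS'l hS'r]
  split_ifs with h <;> simp [h, hθone]

include hθmul hθone in
lemma sum_θS'S'_convMul_θS' (l j : Fin n) :
    ∑ m, toConv (θ l m ∘ₗ S' ∘ₗ S') * toConv (θ m j ∘ₗ S') = if l = j then 1 else 0 := by
  ext c
  simp only [ofConv_sum, LinearMap.sum_apply, (ℛ k c).convMul_apply, LinearMap.comp_apply]
  rw [sum_sum_θ_mul_θ θ hθmul, sum_S'S'_left_mul_S'_right S' hS'l hS'r]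
  split_ifs with h <;> simp [h, hθone]

include hθone hχ in
lemma sum_θS'_convMul_χ (j : Fin n) :
    ∑ l, toConv (θ l j ∘ₗ S') * toConv (χ l) = -toConv (χ j ∘ₗ S') := by
  ext c
  simp only [ofConv_sum, LinearMap.sum_apply, (ℛ k c).convMul_apply, LinearMap.comp_apply]
  simp only [mul_comm (θ _ j _)]
  rw [sum_sum_χ_mul_θ θ χ hχ, sum_right_mul_S'_left S' hS'l hS'r]
  simp_rw [← map_smul, ← map_sum, sum_counit_right_smul_left]
  simp [χ_one θ χ hθone hχ]

include hθone hχ in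
lemma sum_χS'_convMul_θS'S' (m : Fin n) :
    ∑ i, toConv (χ i ∘ₗ S') * toConv (θ i m ∘ₗ S' ∘ₗ S') = -toConv (χ m ∘ₗ S' ∘ₗ S') := by
  ext c
  simp only [ofConv_sum, LinearMap.sum_apply, (ℛ k c).convMul_apply, LinearMap.comp_apply]
  rw [sum_sum_χ_mul_θ θ χ hχ, sum_S'_left_mul_S'S'_right S' hS'l hS'r]
  simp_rw [counit_S' S' hS'r, ← map_smul, ← map_sum, sum_counit_smul]
  simp [χ_one θ χ hθone hχ]

include hθmul hθone

lemma sum_ract_om (x : Fin n → A) :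
    ∑ j, ract θ (om j) (∑ l, hit (θ l j ∘ₗ S') (x l)) = x := by
  funext i
  simp only [Finset.sum_apply, ract_om_apply, map_sum]
  rw [Finset.sum_comm]
  simp only [sum_hit_hit, sum_θ_convMul_θS' θ S' hS'l hS'r hθmul hθone]
  simp [apply_ite, ite_apply]

lemma homD_apply {f : (Fin n → A) →ₗ[k] A} (hf : f ∈ homD θ) (x : Fin n → A) :
    f x = ∑ j, f (om j) * ∑ l, hit (θ l j ∘ₗ S') (x l) := by
  conv_lhs => rw [← sum_ract_om θ S' hS'l hS'r hθmul hθone x]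
  rw [map_sum]
  exact Finset.sum_congr rfl fun j _ => hf (om j) _

lemma homD_ext {f g : homD θ} (h : ∀ j, f.1 (om j) = g.1 (om j)) : f = g := by
  refine Subtype.ext (LinearMap.ext fun x => ?_)
  rw [homD_apply θ S' hS'l hS'r hθmul hθone f.2, homD_apply θ S' hS'l hS'r hθmul hθone g.2]
  simp only [h]

include hξ

lemma dualBasis_apply (i : Fin n) (x : Fin n → A) :
    (ξ i).1 x = ∑ l, hit (θ l i ∘ₗ S') (x l) := by
  rw [homD_apply θ S' hS'l hS'r hθmul hθone (ξ i).2]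
  simp [hξ, ite_mul, Finset.sum_ite_eq]

lemma rAct_dualBasis_apply_om (i j : Fin n) (a : A) :
    (rAct θ (ξ i) a).1 (om j) = hit (θ j i ∘ₗ S') a := by
  simp [rAct, dualBasis_apply θ S' hS'l hS'r hθmul hθone ξ hξ, lmulPi, om, Pi.single_apply,
    apply_ite]

include hχ in
lemma dualBasis_apply_dvec (i : Fin n) (b : A) : (ξ i).1 (dvec χ b) = -hit (χ i ∘ₗ S') b := by
  rw [dualBasis_apply θ S' hS'l hS'r hθmul hθone ξ hξ]
  simp only [dvec, sum_hit_hit, sum_θS'_convMul_χ θ χ S' hS'l hS'r hθone hχ]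
  simp

lemma sum_rAct_dualBasis_dualCoeff (f : homD θ) :
    ∑ i, rAct θ (ξ i) (dualCoeff θ S' f i) = f := by
  refine homD_ext θ S' hS'l hS'r hθmul hθone fun j => ?_
  simp only [Submodule.coe_sum, LinearMap.sum_apply, dualCoeff, map_sum,
    rAct_dualBasis_apply_om θ S' hS'l hS'r hθmul hθone ξ hξ]
  rw [Finset.sum_comm]
  simp only [sum_hit_hit, sum_θS'_convMul_θS'S' θ S' hS'l hS'r hθmul hθone]
  simp [apply_ite, ite_apply]

lemma dualCoeff_sum_rAct_dualBasis (a : Fin n → A) (i : Fin n) :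
    dualCoeff θ S' (∑ l, rAct θ (ξ l) (a l)) i = a i := by
  simp only [dualCoeff, Submodule.coe_sum, LinearMap.sum_apply, map_sum,
    rAct_dualBasis_apply_om θ S' hS'l hS'r hθmul hθone ξ hξ]
  rw [Finset.sum_comm]
  simp only [sum_hit_hit, sum_θS'S'_convMul_θS' θ S' hS'l hS'r hθmul hθone]
  simp [apply_ite, ite_apply]

lemma dualCoeff_rAct (f : homD θ) (b : A) (i : Fin n) :
    dualCoeff θ S' (rAct θ f b) i = dualCoeff θ S' f i * b := by
  conv_lhs => rw [← sum_rAct_dualBasis_dualCoeff θ S' hS'l hS'r hθmul hθone ξ hξ f]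
  simp only [sum_rAct, rAct_rAct]
  exact dualCoeff_sum_rAct_dualBasis θ S' hS'l hS'r hθmul hθone ξ hξ _ i

include hχ

lemma sum_dualBasis_dvec_dualCoeff (f : homD θ) :
    ∑ i, (ξ i).1 (dvec χ (dualCoeff θ S' f i)) = homConn θ χ S' f := by
  simp only [dualBasis_apply_dvec θ χ S' hS'l hS'r hθmul hθone hχ ξ hξ, dualCoeff, map_sum,
    Finset.sum_neg_distrib]
  rw [Finset.sum_comm]
  simp only [sum_hit_hit, sum_χS'_convMul_θS'S' θ χ S' hS'l hS'r hθone hχ]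
  simp [homConn_apply]

lemma IsHomConn.eq_homConn {nabla : homD θ →ₗ[k] A} (h : IsHomConn θ χ nabla)
    (h₀ : ∀ i, nabla (ξ i) = 0) : nabla = homConn θ χ S' := by
  ext f
  conv_lhs => rw [← sum_rAct_dualBasis_dualCoeff θ S' hS'l hS'r hθmul hθone ξ hξ f]
  simp only [map_sum, h _ _, h₀, zero_mul, zero_add]
  exact sum_dualBasis_dvec_dualCoeff θ χ S' hS'l hS'r hθmul hθone hχ ξ hξ f

lemma homConn_isHomConn : IsHomConn θ χ (homConn θ χ S') := by
  intro f b
  have hsum := sum_dualBasis_dvec_dualCoeff θ χ S' hS'l hS'r hθmul hθone hχ ξ hξ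
  calc homConn θ χ S' (rAct θ f b)
      = ∑ i, (ξ i).1 (dvec χ (dualCoeff θ S' f i * b)) := by
        simp only [← hsum, dualCoeff_rAct θ S' hS'l hS'r hθmul hθone ξ hξ]
    _ = ∑ i, ((ξ i).1 (dvec χ (dualCoeff θ S' f i)) * b
          + (rAct θ (ξ i) (dualCoeff θ S' f i)).1 (dvec χ b)) := by
        simp only [dvec_mul θ χ hχ, map_add, (ξ _).2 _ b]
        rfl
    _ = homConn θ χ S' f * b + f.1 (dvec χ b) := by
        rw [Finset.sum_add_distrib, ← Finset.sum_mul, hsum, ← LinearMap.sum_apply,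
          ← Submodule.coe_sum, sum_rAct_dualBasis_dualCoeff θ S' hS'l hS'r hθmul hθone ξ hξ]

end CalculusData

/--
Let `A` be a Hopf algebra with bijective antipode `S` (with
inverse `S'`), and let `(θ_ij, χ_i)` determine a left covariant calculus on `A`.
Then `∇(f) = Σ_i ((χ_i ∘ S⁻²) ⊳ f(ω_i))` is the unique hom-connection on `A`
vanishing on the dual basis `ξ_i`.
-/
theorem unique_homConnection_of_leftCovariantCalculus
    (S' : A →ₗ[k] A)
    (hS'l : ∀ a, S' (HopfAlgebra.antipode (R := k) a) = a)
    (hS'r : ∀ a, HopfAlgebra.antipode (R := k) (S' a) = a)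
    (χ : Fin n → (A →ₗ[k] k))
    (hθmul : ∀ (i j : Fin n) (a b : A),
      θ i j (a * b) = ∑ l, θ i l a * θ l j b)
    (hθone : ∀ i j : Fin n, θ i j 1 = if i = j then (1 : k) else 0)
    (hχ : ∀ (i : Fin n) (a b : A),
      χ i (a * b) = (∑ j, χ j a * θ j i b) + Coalgebra.counit a * χ i b)
    (ξ : Fin n → homD θ)
    (hξ : ∀ i j, (ξ i).1 (om j) = if i = j then (1 : A) else 0) :
    (∃! nabla : homD θ →ₗ[k] A, IsHomConn θ χ nabla ∧ ∀ i, nabla (ξ i) = 0) ∧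
    (∀ nabla : homD θ →ₗ[k] A, (IsHomConn θ χ nabla ∧ ∀ i, nabla (ξ i) = 0) →
      ∀ f : homD θ, nabla f = ∑ i, hit ((χ i) ∘ₗ S' ∘ₗ S') (f.1 (om i))) := by
  have huniq : ∀ nabla : homD θ →ₗ[k] A, IsHomConn θ χ nabla ∧ (∀ i, nabla (ξ i) = 0) →
      nabla = homConn θ χ S' := fun nabla h =>
    h.1.eq_homConn θ χ S' hS'l hS'r hθmul hθone hχ ξ hξ h.2
  refine ⟨⟨homConn θ χ S', ⟨homConn_isHomConn θ χ S' hS'l hS'r hθmul hθone hχ ξ hξ,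
    homConn_dualBasis θ χ S' hS'l hθone hχ ξ hξ⟩, huniq⟩, fun nabla h f => ?_⟩
  rw [huniq nabla h, homConn_apply]

end Stmt13
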